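/- arXiv:2201.02000 — 2 statements merged into one kernel-verified Lean document; each statement's English description precedes it below -/
import Mathlib

section
/- Let n ≥ 2 and ε₁ > 0. Suppose for each prime p and each i ∈ {1,…,n} we are given a complex number α_{p,i} with |α_{p,i}| ≤ p^{1/4 - ε₁}. Define a_f(p^r) = Σ_{i=1}^n α_{p,i}^r. Then the double series Σ_{r≥2} Σ_p (log p)² |a_f(p^r)|² / p^r converges (is finite). -/
open Real Finset

/-!
Since `|α_{p,i}| ≤ p^{1/4-ε}`, the `(p, r)` term is at most `n² (log p)² p^{-(1/2+2ε) r}`.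
Using `log p ≤ p^ε / ε` and splitting `p^{-(1/2+2ε) r} ≤ p^{-(1+4ε)} · 2^{-(1/2+2ε)(r-2)}`
(here `r ≥ 2` is essential), the double series is dominated by the product of the convergent
series `∑_p p^{-(1+2ε)}` and a geometric series in `r`.
-/

theorem norm_sum_pow_le_card_mul {R ι : Type*} [SeminormedRing R] [NormOneClass R]
    {s : Finset ι} {z : ι → R} {B : ℝ} (hB : ∀ i ∈ s, ‖z i‖ ≤ B) (r : ℕ) :
    ‖∑ i ∈ s, z i ^ r‖ ≤ #s * B ^ r := by
  calc ‖∑ i ∈ s, z i ^ r‖ ≤ ∑ i ∈ s, ‖z i‖ ^ r :=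
        (norm_sum_le _ _).trans (sum_le_sum fun i _ => norm_pow_le _ r)
    _ ≤ #s * B ^ r := by
        rw [← nsmul_eq_mul]
        exact sum_le_card_nsmul _ _ _ fun i hi => pow_le_pow_left₀ (norm_nonneg _) (hB i hi) r

theorem pow_le_pow_mul_pow_sub {R : Type*} [Semiring R] [PartialOrder R] [IsOrderedRing R]
    {x y : R} (hx : 0 ≤ x) (hxy : x ≤ y) {k r : ℕ} (hkr : k ≤ r) :
    x ^ r ≤ x ^ k * y ^ (r - k) := by
  rw [← pow_mul_pow_sub x hkr]
  exact mul_le_mul_of_nonneg_left (pow_le_pow_left₀ hx hxy _) (pow_nonneg hx k)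

theorem summable_pow_sub_of_le {y : ℝ} (h0 : 0 ≤ y) (h1 : y < 1) (k : ℕ) :
    Summable (fun r : {r : ℕ // k ≤ r} => y ^ ((r : ℕ) - k)) :=
  (summable_geometric_of_lt_one h0 h1).comp_injective fun a b hab =>
    Subtype.ext (by have := a.2; have := b.2; omega)

theorem log_sq_mul_sq_div_pow_le {p ε C A : ℝ} {r : ℕ} (hp : 2 ≤ p) (hε : 0 < ε) (hA0 : 0 ≤ A)
    (hA : A ≤ C * (p ^ (1 / 4 - ε)) ^ r) (hr : 2 ≤ r) :
    log p ^ 2 * A ^ 2 / p ^ r ≤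
      (C / ε) ^ 2 * ((2 ^ (-(1 / 2 + 2 * ε))) ^ (r - 2) * p ^ (-(1 + 2 * ε))) := by
  have hp0 : 0 < p := by linarith
  have hlog : log p ≤ p ^ ε / ε := log_le_rpow_div hp0.le hε
  have hratio : (p ^ (1 / 4 - ε)) ^ 2 / p = p ^ (-(1 / 2 + 2 * ε)) := by
    rw [← rpow_mul_natCast hp0.le, ← rpow_sub_one hp0.ne']
    congr 1; push_cast; ring
  have hsq : (p ^ ε) ^ 2 * (p ^ (-(1 / 2 + 2 * ε))) ^ 2 = p ^ (-(1 + 2 * ε)) := by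
    rw [← mul_pow, ← rpow_add hp0, ← rpow_mul_natCast hp0.le]
    congr 1; push_cast; ring
  have hx : p ^ (-(1 / 2 + 2 * ε)) ≤ 2 ^ (-(1 / 2 + 2 * ε)) :=
    rpow_le_rpow_of_nonpos two_pos hp (by linarith)
  calc log p ^ 2 * A ^ 2 / p ^ r
      ≤ (p ^ ε / ε) ^ 2 * (C * (p ^ (1 / 4 - ε)) ^ r) ^ 2 / p ^ r := by
        gcongr
        exact log_nonneg (by linarith)
    _ = (C / ε) ^ 2 * (p ^ ε) ^ 2 * (p ^ (-(1 / 2 + 2 * ε))) ^ r := by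
        rw [← hratio, div_pow _ p, mul_pow C, ← pow_mul, mul_comm r 2, pow_mul]
        field_simp
    _ ≤ (C / ε) ^ 2 * (p ^ ε) ^ 2 *
          ((p ^ (-(1 / 2 + 2 * ε))) ^ 2 * (2 ^ (-(1 / 2 + 2 * ε))) ^ (r - 2)) := by
        gcongr
        exact pow_le_pow_mul_pow_sub (by positivity) hx hr
    _ = (C / ε) ^ 2 * ((2 ^ (-(1 / 2 + 2 * ε))) ^ (r - 2) * p ^ (-(1 + 2 * ε))) := by
        rw [← hsq]; ring

theorem stmt_0_general (n : ℕ) (ε₁ : ℝ) (hε₁ : 0 < ε₁)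
    (α : ℕ → ℕ → ℂ)
    (hα : ∀ p : ℕ, p.Prime → ∀ i ∈ Finset.Icc 1 n, ‖α p i‖ ≤ (p : ℝ) ^ ((1:ℝ)/4 - ε₁)) :
    Summable (fun x : {r : ℕ // 2 ≤ r} × {p : ℕ // p.Prime} =>
      (Real.log x.2) ^ 2 * ‖∑ i ∈ Finset.Icc 1 n, (α x.2 i) ^ (x.1 : ℕ)‖ ^ 2
        / (x.2 : ℝ) ^ (x.1 : ℕ)) := by
  have hgeom : (2 : ℝ) ^ (-(1 / 2 + 2 * ε₁)) < 1 :=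
    rpow_lt_one_of_one_lt_of_neg one_lt_two (by linarith)
  have hprimes : Summable (fun p : {p : ℕ // p.Prime} => ((p : ℕ) : ℝ) ^ (-(1 + 2 * ε₁))) :=
    (summable_nat_rpow.mpr (by linarith)).subtype _
  have hdom := ((summable_pow_sub_of_le (by positivity) hgeom 2).mul_of_nonneg hprimes
    (fun _ => by positivity) (fun _ => by positivity)).mul_left ((n / ε₁) ^ 2)
  refine hdom.of_nonneg_of_le (fun _ => by positivity) fun ⟨⟨r, hr⟩, ⟨p, hp⟩⟩ => ?_
  have hbound := norm_sum_pow_le_card_mul (hα p hp) r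
  rw [Nat.card_Icc, Nat.add_sub_cancel] at hbound
  exact log_sq_mul_sq_div_pow_le (by exact_mod_cast hp.two_le) hε₁ (norm_nonneg _) hbound hr

theorem stmt_0 (n : ℕ) (hn : 2 ≤ n) (ε₁ : ℝ) (hε₁ : 0 < ε₁)
    (α : ℕ → ℕ → ℂ)
    (hα : ∀ p : ℕ, p.Prime → ∀ i ∈ Finset.Icc 1 n, ‖α p i‖ ≤ (p : ℝ) ^ ((1:ℝ)/4 - ε₁)) :
    Summable (fun x : {r : ℕ // 2 ≤ r} × {p : ℕ // p.Prime} =>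
      (Real.log x.2) ^ 2 * ‖∑ i ∈ Finset.Icc 1 n, (α x.2 i) ^ (x.1 : ℕ)‖ ^ 2
        / (x.2 : ℝ) ^ (x.1 : ℕ)) :=
  stmt_0_general n ε₁ hε₁ α hα
end

section
/- Let A > 0 and let (γ_k)_{k∈ℕ} be a sequence of real numbers such that for every integer m ≥ 1, the number of indices k with m−1 ≤ |γ_k| ≤ m is at most A·log(t + m) for a fixed t ≥ 2. Then for any A₂ > 0, Σ_k e^{-A₂||t| − |γ_k||} ≪ log t, with implied constant depending only on A and A₂. -/
/-!
Group the indices `k` into the unit shells `m - 1 ≤ |γ k| ≤ m`. A term in shell `m` is at most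
`e^{A₂} e^{-A₂ |m - t|}`, and shell `m` holds at most `A log (t + m) ≤ A (2 log t + |m - t|)`
terms. The exponential decay in `|m - t|` absorbs the linear factor `|m - t|` at the cost of
halving the rate, and `∑ₘ e^{-a |m - t|}` is bounded uniformly in `t` by two geometric series.
-/

open Real Finset

lemma sum_pow_le_of_injOn {ι : Type*} {r : ℝ} (hr₀ : 0 ≤ r) (hr₁ : r < 1) (s : Finset ι)
    {φ : ι → ℕ} (hφ : Set.InjOn φ s) : ∑ i ∈ s, r ^ φ i ≤ (1 - r)⁻¹ := by
  classical
  rw [← sum_image hφ, ← tsum_geometric_of_lt_one hr₀ hr₁]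
  exact (summable_geometric_of_lt_one hr₀ hr₁).sum_le_tsum _ fun j _ => pow_nonneg hr₀ j

lemma sum_exp_neg_mul_abs_natCast_sub_le {a t : ℝ} (ha : 0 < a) (ht : 0 ≤ t) (s : Finset ℕ) :
    ∑ m ∈ s, exp (-a * |(m : ℝ) - t|) ≤ 2 * (1 - exp (-a))⁻¹ := by
  have hr₀ : 0 ≤ exp (-a) := (exp_pos _).le
  have hr₁ : exp (-a) < 1 := exp_lt_one_iff.mpr (neg_lt_zero.mpr ha)
  have hpow (m j : ℕ) (hj : (j : ℝ) ≤ |(m : ℝ) - t|) :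
      exp (-a * |(m : ℝ) - t|) ≤ exp (-a) ^ j := by
    rw [← exp_nat_mul]
    exact exp_le_exp.mpr (by nlinarith)
  set n := ⌊t⌋₊
  have hnt : (n : ℝ) ≤ t := Nat.floor_le ht
  have htn : t < n + 1 := Nat.lt_floor_add_one t
  have hleft : ∑ m ∈ s with m ≤ n, exp (-a * |(m : ℝ) - t|) ≤ (1 - exp (-a))⁻¹ := by
    refine (sum_le_sum fun m hm => hpow m (n - m) ?_).trans
      (sum_pow_le_of_injOn hr₀ hr₁ _ fun x hx y hy hxy => ?_)
    · have hmn := (mem_filter.mp hm).2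
      rw [Nat.cast_sub hmn, abs_sub_comm]
      exact (sub_le_sub_right hnt _).trans (le_abs_self _)
    · have := (mem_filter.mp hx).2
      have := (mem_filter.mp hy).2
      omega
  have hright : ∑ m ∈ s with ¬m ≤ n, exp (-a * |(m : ℝ) - t|) ≤ (1 - exp (-a))⁻¹ := by
    refine (sum_le_sum fun m hm => hpow m (m - (n + 1)) ?_).trans
      (sum_pow_le_of_injOn hr₀ hr₁ _ fun x hx y hy hxy => ?_)
    · have hmn : n + 1 ≤ m := Nat.lt_of_not_le (mem_filter.mp hm).2
      rw [Nat.cast_sub hmn]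
      push_cast
      exact (sub_le_sub_left htn.le _).trans (le_abs_self _)
    · have := (mem_filter.mp hx).2
      have := (mem_filter.mp hy).2
      omega
  rw [← sum_filter_add_sum_filter_not s (· ≤ n), two_mul]
  exact add_le_add hleft hright

lemma mul_exp_neg_mul_le {a : ℝ} (ha : 0 < a) (x : ℝ) :
    x * exp (-a * x) ≤ 2 / a * exp (-(a / 2) * x) := by
  have hx : x ≤ 2 / a * exp (a / 2 * x) := by
    have := add_one_le_exp (a / 2 * x)
    rw [div_mul_eq_mul_div, le_div_iff₀ ha]
    linarith
  calc x * exp (-a * x) ≤ 2 / a * exp (a / 2 * x) * exp (-a * x) := by gcongr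
    _ = 2 / a * exp (-(a / 2) * x) := by rw [mul_assoc, ← exp_add]; ring_nf

lemma log_add_natCast_le {t : ℝ} (ht : 2 ≤ t) (m : ℕ) :
    log (t + m) ≤ 2 * log t + |(m : ℝ) - t| := by
  set x := |(m : ℝ) - t|
  have hx : 0 ≤ x := abs_nonneg _
  have hmx : (m : ℝ) ≤ t + x := by linarith [le_abs_self ((m : ℝ) - t)]
  have hlog2 : log 2 ≤ log t := log_le_log (by norm_num) ht
  calc log (t + m) ≤ log (2 * t * (1 + x)) :=
        log_le_log (by positivity) (by nlinarith)
    _ = log 2 + log t + log (1 + x) := by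
        rw [log_mul (by positivity) (by positivity), log_mul (by norm_num) (by positivity)]
    _ ≤ 2 * log t + x := by linarith [log_le_sub_one_of_pos (by positivity : 0 < 1 + x)]

lemma sum_log_add_mul_exp_neg_le {a t : ℝ} (ha : 0 < a) (ht : 2 ≤ t) (s : Finset ℕ) :
    ∑ m ∈ s, log (t + m) * exp (-a * |(m : ℝ) - t|)
      ≤ (2 + 2 / (a * log 2)) * (2 * (1 - exp (-(a / 2)))⁻¹) * log t := by
  have hlog2 : 0 < log 2 := log_pos (by norm_num)
  have hlogt : log 2 ≤ log t := log_le_log (by norm_num) ht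
  have hterm (m : ℕ) : log (t + m) * exp (-a * |(m : ℝ) - t|)
      ≤ (2 + 2 / (a * log 2)) * log t * exp (-(a / 2) * |(m : ℝ) - t|) := by
    set x := |(m : ℝ) - t|
    have hdecay : exp (-a * x) ≤ exp (-(a / 2) * x) :=
      exp_le_exp.mpr (by nlinarith [abs_nonneg ((m : ℝ) - t)])
    have hconst : 2 / a ≤ 2 / (a * log 2) * log t := by
      rw [div_mul_eq_mul_div, le_div_iff₀ (by positivity)]
      nlinarith [div_mul_cancel₀ 2 ha.ne']
    calc log (t + m) * exp (-a * x) ≤ (2 * log t + x) * exp (-a * x) := by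
          gcongr; exact log_add_natCast_le ht m
      _ = 2 * log t * exp (-a * x) + x * exp (-a * x) := by ring
      _ ≤ 2 * log t * exp (-(a / 2) * x) + 2 / (a * log 2) * log t * exp (-(a / 2) * x) :=
          add_le_add (by gcongr; linarith)
            ((mul_exp_neg_mul_le ha x).trans (by gcongr))
      _ = _ := by ring
  calc ∑ m ∈ s, log (t + m) * exp (-a * |(m : ℝ) - t|)
      ≤ ∑ m ∈ s, (2 + 2 / (a * log 2)) * log t * exp (-(a / 2) * |(m : ℝ) - t|) :=
        sum_le_sum fun m _ => hterm m
    _ = (2 + 2 / (a * log 2)) * log t * ∑ m ∈ s, exp (-(a / 2) * |(m : ℝ) - t|) := by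
        rw [mul_sum]
    _ ≤ (2 + 2 / (a * log 2)) * log t * (2 * (1 - exp (-(a / 2)))⁻¹) := by
        gcongr
        · have := log_nonneg (by linarith : (1 : ℝ) ≤ t)
          positivity
        · exact sum_exp_neg_mul_abs_natCast_sub_le (by positivity) (by linarith) s
    _ = _ := by ring

lemma sum_le_sum_image_mul_of_card_fiber_le {ι κ : Type*} [DecidableEq κ] (s : Finset ι)
    (σ : ι → κ) {f : ι → ℝ} {g N : κ → ℝ} (hg : ∀ m ∈ s.image σ, 0 ≤ g m)
    (hf : ∀ i ∈ s, f i ≤ g (σ i))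
    (hN : ∀ m ∈ s.image σ, (#{i ∈ s | σ i = m} : ℝ) ≤ N m) :
    ∑ i ∈ s, f i ≤ ∑ m ∈ s.image σ, N m * g m := by
  rw [← sum_fiberwise_of_maps_to (fun i hi => mem_image_of_mem σ hi) f]
  refine sum_le_sum fun m hm => ?_
  calc ∑ i ∈ s with σ i = m, f i ≤ #{i ∈ s | σ i = m} • g m :=
        sum_le_card_nsmul _ _ _ fun i hi => (mem_filter.mp hi).2 ▸ hf i (mem_filter.mp hi).1
    _ ≤ N m * g m := by rw [nsmul_eq_mul]; exact mul_le_mul_of_nonneg_right (hN m hm) (hg m hm)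

lemma exp_neg_mul_abs_sub_le {a x y : ℝ} (t : ℝ) (ha : 0 ≤ a) (hxy : |y - x| ≤ 1) :
    exp (-a * |t - x|) ≤ exp a * exp (-a * |y - t|) := by
  rw [← exp_add]
  refine exp_le_exp.mpr ?_
  have := abs_sub_le y x t
  rw [abs_sub_comm x t] at this
  nlinarith

lemma card_le_natCard_of_subset {α : Type*} {s : Finset α} {S : Set α} (hS : S.Finite)
    (h : ∀ a ∈ s, a ∈ S) : #s ≤ Nat.card S := by
  rw [Nat.card_coe_set_eq, ← Set.ncard_coe_finset]
  exact Set.ncard_le_ncard h hS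

lemma natCast_max_one_ceil_bounds {x : ℝ} (hx : 0 ≤ x) :
    ((max 1 ⌈x⌉₊ : ℕ) : ℝ) - 1 ≤ x ∧ x ≤ (max 1 ⌈x⌉₊ : ℕ) := by
  refine ⟨?_, (Nat.le_ceil x).trans (by exact_mod_cast le_max_right _ _)⟩
  rcases Nat.eq_zero_or_pos ⌈x⌉₊ with h0 | h0
  · simp [h0, hx]
  · rw [max_eq_right h0]
    linarith [Nat.ceil_lt_add_one hx]

theorem stmt_13 (A A₂ : ℝ) (hA : 0 < A) (hA₂ : 0 < A₂) :
    ∃ C : ℝ, ∀ t : ℝ, 2 ≤ t → ∀ γ : ℕ → ℝ,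
      (∀ m : ℕ, 1 ≤ m →
        ({k : ℕ | (m : ℝ) - 1 ≤ |γ k| ∧ |γ k| ≤ (m : ℝ)}).Finite ∧
        (Nat.card {k : ℕ | (m : ℝ) - 1 ≤ |γ k| ∧ |γ k| ≤ (m : ℝ)} : ℝ)
          ≤ A * Real.log (t + m)) →
      Summable (fun k : ℕ => Real.exp (-A₂ * |(|t| - |γ k|)|)) ∧
      (∑' k : ℕ, Real.exp (-A₂ * |(|t| - |γ k|)|)) ≤ C * Real.log t := by
  classical
  set K := (2 + 2 / (A₂ * log 2)) * (2 * (1 - exp (-(A₂ / 2)))⁻¹)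
  refine ⟨A * exp A₂ * K, fun t ht γ hγ => ?_⟩
  set σ : ℕ → ℕ := fun k => max 1 ⌈|γ k|⌉₊
  have hσ (k : ℕ) := natCast_max_one_ceil_bounds (abs_nonneg (γ k))
  have hpartial (s : Finset ℕ) :
      ∑ k ∈ s, exp (-A₂ * |(|t| - |γ k|)|) ≤ A * exp A₂ * K * log t := by
    calc ∑ k ∈ s, exp (-A₂ * |(|t| - |γ k|)|)
        ≤ ∑ m ∈ s.image σ, A * log (t + m) * (exp A₂ * exp (-A₂ * |(m : ℝ) - t|)) := by
          refine sum_le_sum_image_mul_of_card_fiber_le s σ (fun _ _ => by positivity)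
            (fun k _ => ?_) (fun m hm => ?_)
          · rw [abs_of_nonneg (by linarith : 0 ≤ t)]
            exact exp_neg_mul_abs_sub_le t hA₂.le
              (abs_le.mpr ⟨by linarith [hσ k], by linarith [hσ k]⟩)
          · obtain ⟨k, -, rfl⟩ := mem_image.mp hm
            obtain ⟨hfin, hcard⟩ := hγ (σ k) (le_max_left _ _)
            refine le_trans (Nat.cast_le.mpr (card_le_natCard_of_subset hfin fun i hi => ?_)) hcard
            exact (mem_filter.mp hi).2 ▸ hσ i
      _ = A * exp A₂ * ∑ m ∈ s.image σ, log (t + m) * exp (-A₂ * |(m : ℝ) - t|) := by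
          rw [mul_sum]; exact sum_congr rfl fun _ _ => by ring
      _ ≤ _ := by
          rw [mul_assoc _ _ (log t)]
          gcongr
          exact sum_log_add_mul_exp_neg_le hA₂ ht _
  have hsummable := summable_of_sum_le (fun k => (exp_pos _).le) hpartial
  exact ⟨hsummable, hsummable.tsum_le_of_sum_le hpartial⟩
end
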